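/- Let (Λ_k)_{k≥0} be a nonnegative real sequence, m, M, T > 0, N ≥ 1, and suppose for each length-k multi-index w over {1,…,m} we have coefficients s_w with |s_w| ≤ (MT)ᵏ/k! and values φ_w(x) with |φ_w(x)| ≤ Λ_k for all x ∈ X. Then for any x₁,…,x_N ∈ X and i.i.d. Rademacher variables ε₁,…,ε_N, (1/N)·E[sup over admissible coefficient families |∑_{i=1}^N ε_i ∑_w s_w φ_w(x_i)|] ≤ (1/√N)·∑_{k≥0} (mMT)ᵏ Λ_k / k!, provided the right-hand side is finite. -/

import Mathlib

open MeasureTheory ProbabilityTheory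

section Helpers
variable {Ω : Type*} [MeasurableSpace Ω] {μ : Measure Ω} [IsProbabilityMeasure μ]

lemma integrable_tsum_nonneg {ι : Type*} [Countable ι] {f : ι → Ω → ℝ}
    (hmeas : ∀ i, AEStronglyMeasurable (f i) μ) (h0 : ∀ i a, 0 ≤ f i a)
    (hb : ∑' i, ∫⁻ a, ‖f i a‖₊ ∂μ ≠ ⊤) :
    Integrable (fun a => ∑' i, f i a) μ := by
  have hf'' : ∀ i, AEMeasurable (fun x => (‖f i x‖₊ : ENNReal)) μ := fun i => (hmeas i).aemeasurable.enorm
  constructor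
  · have : (fun a => ∑' i, f i a) = fun a => ∑' i, ((‖f i a‖₊ : ℝ)) := by
      funext a; congr 1; funext i
      simp [Real.norm_eq_abs, abs_of_nonneg (h0 i a)]
    rw [this]
    simp_rw [← NNReal.coe_tsum]
    rw [aestronglyMeasurable_iff_aemeasurable]
    exact (AEMeasurable.nnreal_tsum (fun i => (hmeas i).nnnorm.aemeasurable)).coe_nnreal_real
  · rw [hasFiniteIntegral_iff_norm]
    have hle : ∀ a, ENNReal.ofReal ‖∑' i, f i a‖ ≤ ∑' i, (‖f i a‖₊ : ENNReal) := by
      intro a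
      by_cases hsum : Summable (fun i => f i a)
      · rw [Real.norm_eq_abs, abs_of_nonneg (tsum_nonneg (fun i => h0 i a)),
          ENNReal.ofReal_tsum_of_nonneg (fun i => h0 i a) hsum]
        refine ENNReal.tsum_le_tsum (fun i => ?_)
        rw [← enorm_eq_nnnorm, Real.enorm_eq_ofReal (h0 i a)]
      · rw [tsum_eq_zero_of_not_summable hsum]
        simp
    calc ∫⁻ a, ENNReal.ofReal ‖∑' i, f i a‖ ∂μ
        ≤ ∫⁻ a, ∑' i, (‖f i a‖₊ : ENNReal) ∂μ := lintegral_mono hle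
      _ = ∑' i, ∫⁻ a, (‖f i a‖₊ : ENNReal) ∂μ := lintegral_tsum hf''
      _ < ⊤ := hb.lt_top

lemma sigma_summable_tsum {m : ℕ} (d : ℕ → ℝ) (hd : ∀ k, 0 ≤ d k)
    (h : Summable fun k => (m : ℝ) ^ k * d k) :
    Summable (fun w : Σ k : ℕ, Fin k → Fin m => d w.1) ∧
      ∑' w : Σ k : ℕ, Fin k → Fin m, d w.1 = ∑' k, (m : ℝ) ^ k * d k := by
  have hfiber : ∀ k : ℕ, ∑' _b : Fin k → Fin m, d k = (m : ℝ) ^ k * d k := by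
    intro k
    rw [tsum_fintype]
    simp [Finset.sum_const, Fintype.card_fun, nsmul_eq_mul]
  have hsum : Summable (fun w : Σ k : ℕ, Fin k → Fin m => d w.1) := by
    rw [summable_sigma_of_nonneg (fun w => hd w.1)]
    constructor
    · intro k; exact Summable.of_finite
    · simp_rw [hfiber]; exact h
  refine ⟨hsum, ?_⟩
  rw [Summable.tsum_sigma hsum]
  simp_rw [hfiber]
lemma rad_ae {e : Ω → ℝ} (hm : Measurable e)
    (hd : Measure.map e μ = (1 / 2 : ENNReal) • Measure.dirac (1 : ℝ) +
      (1 / 2 : ENNReal) • Measure.dirac (-1 : ℝ)) :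
    ∀ᵐ ω ∂μ, |e ω| = 1 := by
  have hset : MeasurableSet ({1, -1} : Set ℝ) := measurableSet_insert.mpr (measurableSet_singleton _)
  have h0 : μ (e ⁻¹' ({1, -1} : Set ℝ)ᶜ) = 0 := by
    rw [← Measure.map_apply hm hset.compl, hd]
    simp [Measure.dirac_apply' _ hset.compl]
  have h1 : ∀ᵐ ω ∂μ, e ω ∈ ({1, -1} : Set ℝ) := by
    rw [MeasureTheory.ae_iff]
    exact h0
  filter_upwards [h1] with ω hω
  rcases hω with h | h <;> simp_all

lemma rad_int {e : Ω → ℝ} (hm : Measurable e)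
    (hd : Measure.map e μ = (1 / 2 : ENNReal) • Measure.dirac (1 : ℝ) +
      (1 / 2 : ENNReal) • Measure.dirac (-1 : ℝ)) (f : ℝ → ℝ) (hf : Measurable f) :
    ∫ ω, f (e ω) ∂μ = (f 1 + f (-1)) / 2 := by
  rw [← integral_map hm.aemeasurable hf.aestronglyMeasurable, hd]
  rw [integral_add_measure, integral_smul_measure, integral_smul_measure, integral_dirac' _ _ hf.stronglyMeasurable, integral_dirac' _ _ hf.stronglyMeasurable]
  · simp; ring
  · exact (((integrable_const (f 1)).congr (ae_eq_dirac' hf).symm).smul_measure (by norm_num))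
  · exact (((integrable_const (f (-1))).congr (ae_eq_dirac' hf).symm).smul_measure (by norm_num))

lemma rad_lemma1 {N : ℕ} (ε : Fin N → Ω → ℝ) (hmeas : ∀ i, Measurable (ε i))
    (hindep : iIndepFun ε μ)
    (hdist : ∀ i, Measure.map (ε i) μ = (1 / 2 : ENNReal) • Measure.dirac (1 : ℝ) +
      (1 / 2 : ENNReal) • Measure.dirac (-1 : ℝ))
    (a : Fin N → ℝ) (Λk : ℝ) (hΛ : 0 ≤ Λk) (ha : ∀ i, |a i| ≤ Λk) :
    ∫ ω, |∑ i, ε i ω * a i| ∂μ ≤ Real.sqrt N * Λk := by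
  set Z : Ω → ℝ := fun ω => ∑ i, ε i ω * a i with hZ
  have hZm : Measurable Z := Finset.measurable_sum _ (fun i _ => (hmeas i).mul_const _)
  have hae : ∀ᵐ ω ∂μ, ∀ i, |ε i ω| = 1 :=
    (MeasureTheory.ae_all_iff).mpr (fun i => rad_ae (hmeas i) (hdist i))
  have hZbdd : ∀ᵐ ω ∂μ, ‖Z ω‖ ≤ (N : ℝ) * Λk := by
    filter_upwards [hae] with ω hω
    calc ‖Z ω‖ ≤ ∑ i, ‖ε i ω * a i‖ := norm_sum_le _ _
    _ ≤ ∑ _i : Fin N, Λk := by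
        refine Finset.sum_le_sum (fun i _ => ?_)
        rw [Real.norm_eq_abs, abs_mul, hω i, one_mul]; exact ha i
    _ = (N : ℝ) * Λk := by simp [mul_comm]
  have hmem2 : MemLp Z 2 μ := MemLp.of_bound hZm.aestronglyMeasurable _ hZbdd
  have habs2 : MemLp (fun ω => |Z ω|) 2 μ := hmem2.abs
  -- (E|Z|)^2 ≤ E Z^2
  have key : (∫ ω, |Z ω| ∂μ) ^ 2 ≤ ∫ ω, Z ω ^ 2 ∂μ := by
    have hv := variance_nonneg (fun ω => |Z ω|) μ
    rw [variance_eq_sub habs2] at hv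
    have : ∫ ω, (fun ω => |Z ω|) ω ^ 2 ∂μ = ∫ ω, Z ω ^ 2 ∂μ := by
      simp [sq_abs]
    simp only [Pi.pow_apply] at hv
    calc (∫ ω, |Z ω| ∂μ) ^ 2 ≤ ∫ ω, |Z ω| ^ 2 ∂μ := by linarith
    _ = ∫ ω, Z ω ^ 2 ∂μ := by simp [sq_abs]
  -- integrability of products
  have hint : ∀ i j : Fin N, Integrable (fun ω => ε i ω * ε j ω) μ := by
    intro i j
    refine (integrable_const (1 : ℝ)).mono' ((hmeas i).mul (hmeas j)).aestronglyMeasurable ?_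
    filter_upwards [hae] with ω hω
    simp [Real.norm_eq_abs, abs_mul, hω i, hω j]
  have hprod : ∀ i j : Fin N, i ≠ j → ∫ ω, ε i ω * ε j ω ∂μ = 0 := by
    intro i j hij
    have h1 : Integrable (ε i) μ := by
      refine (integrable_const (1 : ℝ)).mono' (hmeas i).aestronglyMeasurable ?_
      filter_upwards [hae] with ω hω; simp [Real.norm_eq_abs, hω i]
    have h2 : Integrable (ε j) μ := by
      refine (integrable_const (1 : ℝ)).mono' (hmeas j).aestronglyMeasurable ?_
      filter_upwards [hae] with ω hω; simp [Real.norm_eq_abs, hω j]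
    show ∫ ω, (ε i * ε j) ω ∂μ = 0
    rw [(hindep.indepFun hij).integral_mul_eq_mul_integral h1.aestronglyMeasurable h2.aestronglyMeasurable]
    have e1 : ∫ ω, ε i ω ∂μ = 0 := by
      have := rad_int (μ := μ) (hmeas i) (hdist i) (fun y => y) measurable_id
      simpa using this
    rw [e1, zero_mul]
  have hsq : ∀ i : Fin N, ∫ ω, ε i ω * ε i ω ∂μ = 1 := by
    intro i
    have := rad_int (μ := μ) (hmeas i) (hdist i) (fun y => y * y) (measurable_id.mul measurable_id)
    simpa using this
  -- E Z^2 = ∑ a_i^2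
  have hEZ2 : ∫ ω, Z ω ^ 2 ∂μ = ∑ i, a i ^ 2 := by
    have expand : ∀ ω, Z ω ^ 2 = ∑ i, ∑ j, (ε i ω * ε j ω) * (a i * a j) := by
      intro ω
      rw [sq, hZ, Finset.sum_mul_sum]
      refine Finset.sum_congr rfl fun i _ => Finset.sum_congr rfl fun j _ => by ring
    simp_rw [expand]
    rw [integral_finset_sum _ (fun i _ => integrable_finset_sum _
      (fun j _ => (hint i j).mul_const _))]
    have : ∀ i : Fin N, ∫ ω, ∑ j, (ε i ω * ε j ω) * (a i * a j) ∂μ = a i ^ 2 := by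
      intro i
      rw [integral_finset_sum _ (fun j _ => (hint i j).mul_const _)]
      have : ∀ j : Fin N, ∫ ω, (ε i ω * ε j ω) * (a i * a j) ∂μ
          = (if j = i then a i ^ 2 else 0) := by
        intro j
        rw [integral_mul_const]
        by_cases h : j = i
        · subst h; rw [hsq j]; simp [sq]
        · rw [hprod i j (Ne.symm h)]; simp [h]
      simp_rw [this]
      simp
    simp_rw [this]
  rw [hEZ2] at key
  have hb : (∑ i, a i ^ 2) ≤ (N : ℝ) * Λk ^ 2 := by
    calc (∑ i, a i ^ 2) ≤ ∑ _i : Fin N, Λk ^ 2 := by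
          refine Finset.sum_le_sum (fun i _ => ?_)
          rw [← sq_abs]; exact pow_le_pow_left₀ (abs_nonneg _) (ha i) 2
    _ = (N : ℝ) * Λk ^ 2 := by simp [mul_comm]
  have hnn : 0 ≤ ∫ ω, |Z ω| ∂μ := integral_nonneg (fun ω => abs_nonneg _)
  have : (∫ ω, |Z ω| ∂μ) ^ 2 ≤ (N : ℝ) * Λk ^ 2 := le_trans key hb
  calc ∫ ω, |Z ω| ∂μ ≤ Real.sqrt ((N : ℝ) * Λk ^ 2) :=
        Real.le_sqrt_of_sq_le this
  _ = Real.sqrt N * Λk := by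
      rw [Real.sqrt_mul (Nat.cast_nonneg N), Real.sqrt_sq hΛ]

end Helpers

/-- Abstract form of the main theorem: if the coefficients satisfy
`|s_w| ≤ (MT)ᵏ/k!` and the features satisfy `|φ_w(x)| ≤ Λ_k` for every
multi-index `w` of length `k` over `{1,…,m}`, then the empirical Rademacher
complexity of the class `{x ↦ ∑_w s_w φ_w(x)}` is bounded by
`(1/√N) ∑_k (mMT)ᵏ Λ_k / k!`, provided this series converges. -/
theorem stmt_14 {Ω : Type*} [MeasurableSpace Ω] (μ : Measure Ω) [IsProbabilityMeasure μ]
    {X : Type*} {U : Type*} [Nonempty U]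
    (Λ : ℕ → ℝ) (hΛ0 : ∀ k, 0 ≤ Λ k)
    (m : ℕ) (M T : ℝ) (hm : 1 ≤ m) (hM : 0 < M) (hT : 0 < T)
    (N : ℕ) (hN : 1 ≤ N) (x : Fin N → X)
    (s : U → (Σ k : ℕ, Fin k → Fin m) → ℝ)
    (hs : ∀ (u : U) (w : Σ k : ℕ, Fin k → Fin m),
      |s u w| ≤ (M * T) ^ w.1 / (Nat.factorial w.1 : ℝ))
    (φ : (Σ k : ℕ, Fin k → Fin m) → X → ℝ)
    (hφ : ∀ (w : Σ k : ℕ, Fin k → Fin m) (y : X), |φ w y| ≤ Λ w.1)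
    (ε : Fin N → Ω → ℝ) (hmeas : ∀ i, Measurable (ε i))
    (hindep : iIndepFun ε μ)
    (hdist : ∀ i, Measure.map (ε i) μ =
      (1 / 2 : ENNReal) • Measure.dirac (1 : ℝ) +
      (1 / 2 : ENNReal) • Measure.dirac (-1 : ℝ))
    (hfin : Summable (fun k : ℕ => ((m : ℝ) * M * T) ^ k * Λ k / (Nat.factorial k : ℝ))) :
    (1 / (N : ℝ)) *
        ∫ ω, ⨆ u : U, |∑ i, ε i ω * ∑' w : (Σ k : ℕ, Fin k → Fin m), s u w * φ w (x i)| ∂μ ≤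
      (1 / Real.sqrt N) *
        ∑' k : ℕ, ((m : ℝ) * M * T) ^ k * Λ k / (Nat.factorial k : ℝ) := by
  classical
  have hMT : 0 < M * T := mul_pos hM hT
  set c : (Σ k : ℕ, Fin k → Fin m) → ℝ :=
    fun w => (M * T) ^ w.1 / (Nat.factorial w.1 : ℝ) with hc
  have hc0 : ∀ w, 0 ≤ c w := fun w => div_nonneg (pow_nonneg hMT.le _) (Nat.cast_nonneg _)
  set d : ℕ → ℝ := fun k => (M * T) ^ k / (Nat.factorial k : ℝ) * Λ k with hd
  have hd0 : ∀ k, 0 ≤ d k := fun k =>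
    mul_nonneg (div_nonneg (pow_nonneg hMT.le _) (Nat.cast_nonneg _)) (hΛ0 k)
  have hdm : (fun k => (m : ℝ) ^ k * d k)
      = fun k => ((m : ℝ) * M * T) ^ k * Λ k / (Nat.factorial k : ℝ) := by
    funext k
    rw [hd]
    rw [show ((m : ℝ) * M * T) ^ k = (m : ℝ) ^ k * (M * T) ^ k from by
      rw [mul_assoc, mul_pow]]
    ring
  have hsummm : Summable (fun k => (m : ℝ) ^ k * d k) := by rw [hdm]; exact hfin
  obtain ⟨hSd, hSdeq⟩ := sigma_summable_tsum d hd0 hsummm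
  have hcd : ∀ w : (Σ k : ℕ, Fin k → Fin m), c w * Λ w.1 = d w.1 := fun w => rfl
  set h : (Σ k : ℕ, Fin k → Fin m) → Ω → ℝ :=
    fun w ω => c w * |∑ i, ε i ω * φ w (x i)| with hh
  have hhmeas : ∀ w, Measurable (h w) := fun w =>
    ((Finset.measurable_sum _ (fun i _ => (hmeas i).mul_const _)).abs).const_mul _
  have hh0 : ∀ w ω, 0 ≤ h w ω := fun w ω => mul_nonneg (hc0 w) (abs_nonneg _)
  -- pointwise summability of h · ω
  have habs_sum_bound : ∀ ω (w : Σ k : ℕ, Fin k → Fin m),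
      |∑ i, ε i ω * φ w (x i)| ≤ (∑ i, |ε i ω|) * Λ w.1 := by
    intro ω w
    calc |∑ i, ε i ω * φ w (x i)| ≤ ∑ i, |ε i ω * φ w (x i)| :=
          Finset.abs_sum_le_sum_abs _ _
    _ ≤ ∑ i, |ε i ω| * Λ w.1 := Finset.sum_le_sum fun i _ => by
          rw [abs_mul]; exact mul_le_mul_of_nonneg_left (hφ w _) (abs_nonneg _)
    _ = (∑ i, |ε i ω|) * Λ w.1 := (Finset.sum_mul _ _ _).symm
  have hA : ∀ ω, Summable (fun w : (Σ k : ℕ, Fin k → Fin m) => h w ω) := by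
    intro ω
    refine Summable.of_nonneg_of_le (fun w => hh0 w ω) (fun w => ?_)
      (hSd.mul_left (∑ i, |ε i ω|))
    calc h w ω ≤ c w * ((∑ i, |ε i ω|) * Λ w.1) :=
          mul_le_mul_of_nonneg_left (habs_sum_bound ω w) (hc0 w)
    _ = (∑ i, |ε i ω|) * d w.1 := by rw [← hcd w]; ring
  -- pointwise bound: sup ≤ tsum of h
  have hfg : ∀ ω, (⨆ u : U, |∑ i, ε i ω *
        ∑' w : (Σ k : ℕ, Fin k → Fin m), s u w * φ w (x i)|) ≤
      ∑' w : (Σ k : ℕ, Fin k → Fin m), h w ω := by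
    intro ω
    refine ciSup_le (fun u => ?_)
    have hts : ∀ i : Fin N,
        Summable (fun w : (Σ k : ℕ, Fin k → Fin m) => ε i ω * (s u w * φ w (x i))) := by
      intro i
      refine Summable.of_norm_bounded (g := fun w => |ε i ω| * d w.1) (hSd.mul_left _) (fun w => ?_)
      rw [Real.norm_eq_abs, abs_mul, abs_mul]
      refine mul_le_mul_of_nonneg_left ?_ (abs_nonneg _)
      calc |s u w| * |φ w (x i)| ≤ c w * Λ w.1 :=
            mul_le_mul (hs u w) (hφ w _) (abs_nonneg _) (hc0 w)
      _ = d w.1 := hcd w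
    have hswap : ∑ i, ε i ω * ∑' w : (Σ k : ℕ, Fin k → Fin m), s u w * φ w (x i)
        = ∑' w : (Σ k : ℕ, Fin k → Fin m), ∑ i, ε i ω * (s u w * φ w (x i)) := by
      have h1 : ∀ i : Fin N, ε i ω * ∑' w : (Σ k : ℕ, Fin k → Fin m), s u w * φ w (x i)
          = ∑' w : (Σ k : ℕ, Fin k → Fin m), ε i ω * (s u w * φ w (x i)) :=
        fun i => (tsum_mul_left).symm
      simp_rw [h1]
      exact (Summable.tsum_finsetSum (fun i _ => hts i)).symm
    rw [hswap]
    have hFs : ∀ (w : Σ k : ℕ, Fin k → Fin m),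
        ∑ i, ε i ω * (s u w * φ w (x i)) = s u w * ∑ i, ε i ω * φ w (x i) := by
      intro w
      rw [Finset.mul_sum]
      exact Finset.sum_congr rfl fun i _ => by ring
    have hnormsum : Summable (fun w : (Σ k : ℕ, Fin k → Fin m) =>
        ‖∑ i, ε i ω * (s u w * φ w (x i))‖) := by
      refine Summable.of_nonneg_of_le (fun w => norm_nonneg _) (fun w => ?_)
        (hA ω)
      rw [Real.norm_eq_abs, hFs w, abs_mul]
      exact mul_le_mul_of_nonneg_right (hs u w) (abs_nonneg _)
    calc |∑' w : (Σ k : ℕ, Fin k → Fin m), ∑ i, ε i ω * (s u w * φ w (x i))|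
        ≤ ∑' w : (Σ k : ℕ, Fin k → Fin m), ‖∑ i, ε i ω * (s u w * φ w (x i))‖ :=
          norm_tsum_le_tsum_norm hnormsum
    _ ≤ ∑' w : (Σ k : ℕ, Fin k → Fin m), h w ω := by
        refine Summable.tsum_le_tsum (fun w => ?_) hnormsum (hA ω)
        rw [Real.norm_eq_abs, hFs w, abs_mul]
        exact mul_le_mul_of_nonneg_right (hs u w) (abs_nonneg _)
  -- integrability facts
  have hae : ∀ᵐ ω ∂μ, ∀ i, |ε i ω| = 1 :=
    (MeasureTheory.ae_all_iff).mpr (fun i => rad_ae (hmeas i) (hdist i))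
  have hlint : ∀ w : (Σ k : ℕ, Fin k → Fin m),
      ∫⁻ ω, ‖h w ω‖₊ ∂μ ≤ ENNReal.ofReal ((N : ℝ) * d w.1) := by
    intro w
    have hb : ∀ᵐ ω ∂μ, (‖h w ω‖₊ : ENNReal) ≤ ENNReal.ofReal ((N : ℝ) * d w.1) := by
      filter_upwards [hae] with ω hω
      rw [← enorm_eq_nnnorm, Real.enorm_eq_ofReal (hh0 w ω)]
      refine ENNReal.ofReal_le_ofReal ?_
      calc h w ω ≤ c w * ((∑ i, |ε i ω|) * Λ w.1) :=
            mul_le_mul_of_nonneg_left (habs_sum_bound ω w) (hc0 w)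
      _ = (∑ i, |ε i ω|) * d w.1 := by rw [← hcd w]; ring
      _ = (N : ℝ) * d w.1 := by
            congr 1
            simp [hω]
    calc ∫⁻ ω, ‖h w ω‖₊ ∂μ ≤ ∫⁻ _ω, ENNReal.ofReal ((N : ℝ) * d w.1) ∂μ :=
          lintegral_mono_ae hb
    _ = ENNReal.ofReal ((N : ℝ) * d w.1) := by simp
  have hSlint : ∑' w : (Σ k : ℕ, Fin k → Fin m), ∫⁻ ω, ‖h w ω‖₊ ∂μ ≠ ⊤ := by
    have hsd : Summable (fun w : (Σ k : ℕ, Fin k → Fin m) => (N : ℝ) * d w.1) :=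
      hSd.mul_left _
    have hle : ∑' w : (Σ k : ℕ, Fin k → Fin m), ∫⁻ ω, ‖h w ω‖₊ ∂μ
        ≤ ENNReal.ofReal (∑' w : (Σ k : ℕ, Fin k → Fin m), (N : ℝ) * d w.1) := by
      rw [ENNReal.ofReal_tsum_of_nonneg
        (fun w => mul_nonneg (Nat.cast_nonneg N) (hd0 _)) hsd]
      exact ENNReal.tsum_le_tsum hlint
    exact (hle.trans_lt ENNReal.ofReal_lt_top).ne
  have hgint : Integrable (fun ω => ∑' w : (Σ k : ℕ, Fin k → Fin m), h w ω) μ :=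
    integrable_tsum_nonneg (fun w => (hhmeas w).aestronglyMeasurable) hh0 hSlint
  have hmono : ∫ ω, (⨆ u : U, |∑ i, ε i ω *
        ∑' w : (Σ k : ℕ, Fin k → Fin m), s u w * φ w (x i)|) ∂μ
      ≤ ∫ ω, ∑' w : (Σ k : ℕ, Fin k → Fin m), h w ω ∂μ :=
    integral_mono_of_nonneg
      (Filter.Eventually.of_forall fun ω => Real.iSup_nonneg fun u => abs_nonneg _)
      hgint (Filter.Eventually.of_forall hfg)
  have hint_eq : ∫ ω, ∑' w : (Σ k : ℕ, Fin k → Fin m), h w ω ∂μ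
      = ∑' w : (Σ k : ℕ, Fin k → Fin m), ∫ ω, h w ω ∂μ :=
    integral_tsum (fun w => (hhmeas w).aestronglyMeasurable) hSlint
  have hIw : ∀ w : (Σ k : ℕ, Fin k → Fin m),
      ∫ ω, h w ω ∂μ ≤ Real.sqrt N * d w.1 := by
    intro w
    rw [hh]
    rw [integral_const_mul]
    calc c w * ∫ ω, |∑ i, ε i ω * φ w (x i)| ∂μ
        ≤ c w * (Real.sqrt N * Λ w.1) :=
          mul_le_mul_of_nonneg_left
            (rad_lemma1 ε hmeas hindep hdist (fun i => φ w (x i)) (Λ w.1) (hΛ0 _)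
              (fun i => hφ w _)) (hc0 w)
    _ = Real.sqrt N * d w.1 := by rw [← hcd w]; ring
  have hIsummable : Summable (fun w : (Σ k : ℕ, Fin k → Fin m) => ∫ ω, h w ω ∂μ) :=
    Summable.of_nonneg_of_le (fun w => integral_nonneg (fun ω => hh0 w ω)) hIw
      (hSd.mul_left _)
  have hfinal : ∑' w : (Σ k : ℕ, Fin k → Fin m), ∫ ω, h w ω ∂μ
      ≤ Real.sqrt N * ∑' k, (m : ℝ) ^ k * d k := by
    calc ∑' w : (Σ k : ℕ, Fin k → Fin m), ∫ ω, h w ω ∂μ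
        ≤ ∑' w : (Σ k : ℕ, Fin k → Fin m), Real.sqrt N * d w.1 :=
          Summable.tsum_le_tsum hIw hIsummable (hSd.mul_left _)
    _ = Real.sqrt N * ∑' w : (Σ k : ℕ, Fin k → Fin m), d w.1 := tsum_mul_left
    _ = Real.sqrt N * ∑' k, (m : ℝ) ^ k * d k := by rw [hSdeq]
  have hN0 : (0 : ℝ) < N := by exact_mod_cast hN
  have hsN : 0 < Real.sqrt N := Real.sqrt_pos.mpr hN0
  have hrhs : ∑' k : ℕ, ((m : ℝ) * M * T) ^ k * Λ k / (Nat.factorial k : ℝ)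
      = ∑' k, (m : ℝ) ^ k * d k := by rw [hdm]
  rw [hrhs]
  calc (1 / (N : ℝ)) * ∫ ω, (⨆ u : U, |∑ i, ε i ω *
        ∑' w : (Σ k : ℕ, Fin k → Fin m), s u w * φ w (x i)|) ∂μ
      ≤ (1 / (N : ℝ)) * (Real.sqrt N * ∑' k, (m : ℝ) ^ k * d k) := by
        refine mul_le_mul_of_nonneg_left ?_ (by positivity)
        exact hmono.trans (le_of_le_of_eq (le_of_eq hint_eq) rfl |>.trans hfinal)
  _ = (1 / Real.sqrt N) * ∑' k, (m : ℝ) ^ k * d k := by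
      have hmul : Real.sqrt N * Real.sqrt N = (N : ℝ) := Real.mul_self_sqrt hN0.le
      have h1 : (1 / (N : ℝ)) * Real.sqrt N = 1 / Real.sqrt N := by
        rw [eq_div_iff hsN.ne', one_div, mul_assoc, ← hmul]
        field_simp
        rw [Real.sqrt_sq hsN.le]
      rw [← mul_assoc, h1]
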